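/- arXiv:1811.09768 — 4 statements merged into one kernel-verified Lean document; each statement's English description precedes it below -/
import Mathlib

section
/- Radial Sobolev embedding: there exists a constant C > 0 such that for every radial smooth compactly supported function f : ℝ³ → ℂ (radial meaning f(x) depends only on |x|) and every x ∈ ℝ³, one has |x| · |f(x)| ≤ C (‖f‖_{L²(ℝ³)} + ‖∇f‖_{L²(ℝ³)}). -/
open MeasureTheory

noncomputable section

abbrev E3 : Type := EuclideanSpace ℝ (Fin 3)

/-- `|∇f(x)|²` for a complex-valued function: the sum of the squared moduli of
the partial derivatives. -/
def gradSq (f : E3 → ℂ) (x : E3) : ℝ :=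
  ∑ i : Fin 3, ‖fderiv ℝ f x (EuclideanSpace.single i (1 : ℝ))‖ ^ 2

lemma gradSq_nonneg (f : E3 → ℂ) (x : E3) : 0 ≤ gradSq f x := by
  apply Finset.sum_nonneg; intro i _; positivity

/-- Cauchy–Schwarz style bound: the derivative of `f` in a unit direction is bounded
by `sqrt (gradSq f y)`. -/
lemma dir_deriv_sq_le (f : E3 → ℂ) (y u : E3) (hu : ‖u‖ = 1) :
    ‖fderiv ℝ f y u‖ ^ 2 ≤ gradSq f y := by
  set D := fderiv ℝ f y
  have hdecomp : u = ∑ i, EuclideanSpace.single i (u i) := by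
    ext j
    have : (∑ i, EuclideanSpace.single i (u i)) j
        = ∑ i, EuclideanSpace.single i (u i) j := by
      rw [WithLp.ofLp_sum]; exact Finset.sum_apply j Finset.univ _
    rw [this]; simp [EuclideanSpace.single_apply]
  have hsingle : ∀ i : Fin 3, EuclideanSpace.single i (u i)
      = (u i) • EuclideanSpace.single i (1 : ℝ) := by
    intro i; ext j; simp [EuclideanSpace.single_apply]
  have hDu : D u = ∑ i, (u i) • D (EuclideanSpace.single i (1 : ℝ)) := by
    conv_lhs => rw [hdecomp]
    rw [map_sum]
    exact Finset.sum_congr rfl fun i _ => by rw [hsingle i, D.map_smul]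
  have h1 : ‖D u‖ ≤ ∑ i, |u i| * ‖D (EuclideanSpace.single i (1 : ℝ))‖ := by
    rw [hDu]
    refine (norm_sum_le _ _).trans ?_
    apply Finset.sum_le_sum; intro i _
    rw [norm_smul, Real.norm_eq_abs]
  have h2 : ‖D u‖ ^ 2 ≤ (∑ i, |u i| * ‖D (EuclideanSpace.single i (1 : ℝ))‖) ^ 2 :=
    pow_le_pow_left₀ (norm_nonneg _) h1 2
  have h3 := Finset.sum_mul_sq_le_sq_mul_sq Finset.univ (fun i => |u i|)
      (fun i => ‖D (EuclideanSpace.single i (1 : ℝ))‖)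
  have hnu : (∑ i, |u i| ^ 2) = 1 := by
    have : ‖u‖ ^ 2 = ∑ i, |u i| ^ 2 := by
      rw [EuclideanSpace.norm_eq, Real.sq_sqrt (by positivity)]
      simp [Real.norm_eq_abs]
    rw [← this, hu, one_pow]
  calc ‖D u‖ ^ 2 ≤ (∑ i, |u i| * ‖D (EuclideanSpace.single i (1 : ℝ))‖) ^ 2 := h2
    _ ≤ (∑ i, |u i| ^ 2) * ∑ i, ‖D (EuclideanSpace.single i (1 : ℝ))‖ ^ 2 := h3
    _ = gradSq f y := by rw [hnu, one_mul]; rfl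

set_option maxHeartbeats 2000000 in
/-- Radial Sobolev embedding: `|x| |f(x)| ≲ ‖f‖_{L²} + ‖∇f‖_{L²}` for radial `f`. -/
theorem stmt5 :
    ∃ C > (0 : ℝ), ∀ f : E3 → ℂ, ContDiff ℝ (⊤ : ℕ∞) f → HasCompactSupport f →
      (∀ x y : E3, ‖x‖ = ‖y‖ → f x = f y) →
      ∀ x : E3, ‖x‖ * ‖f x‖ ≤
        C * (Real.sqrt (∫ y : E3, ‖f y‖ ^ 2) + Real.sqrt (∫ y : E3, gradSq f y)) := by
  set κ : ℝ := 3 * (volume (Metric.ball (0:E3) 1)).toReal with hκdef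
  have hκpos : 0 < κ := by
    have : (0:ℝ) < (volume (Metric.ball (0:E3) 1)).toReal :=
      ENNReal.toReal_pos (ne_of_gt (Metric.measure_ball_pos _ _ one_pos)) measure_ball_lt_top.ne
    positivity
  refine ⟨Real.sqrt κ⁻¹ + 1, by positivity, ?_⟩
  intro f hf hsupp hrad x
  set A := Real.sqrt (∫ y : E3, ‖f y‖ ^ 2) with hA
  set B := Real.sqrt (∫ y : E3, gradSq f y) with hB
  have hAnn : 0 ≤ A := Real.sqrt_nonneg _
  have hBnn : 0 ≤ B := Real.sqrt_nonneg _
  have hABnn : 0 ≤ A + B := by linarith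
  by_cases hx0 : x = 0
  · subst hx0; simp; positivity
  -- setup
  set r := ‖x‖ with hr
  have hrpos : 0 < r := norm_pos_iff.mpr hx0
  set e₁ : E3 := EuclideanSpace.single 0 (1:ℝ) with he₁def
  have he₁ : ‖e₁‖ = 1 := by simp [he₁def, EuclideanSpace.norm_single]
  set g : ℝ → ℂ := fun s => f (s • e₁) with hgdef
  have hnorm_smul_e : ∀ s : ℝ, 0 ≤ s → ‖s • e₁‖ = s := by
    intro s hs; rw [norm_smul, he₁, mul_one, Real.norm_eq_abs, abs_of_nonneg hs]
  have hfg : ∀ y : E3, f y = g ‖y‖ := by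
    intro y
    exact hrad y (‖y‖ • e₁) (by rw [hnorm_smul_e _ (norm_nonneg y)])
  have hg : ContDiff ℝ (⊤ : ℕ∞) g := hf.comp (contDiff_id.smul contDiff_const)
  have hgdiff : ∀ s : ℝ, HasDerivAt g (deriv g s) s :=
    fun s => (hg.differentiable (by simp) s).hasDerivAt
  have hgcont : Continuous g := hg.continuous
  have hg'cont : Continuous (deriv g) := hg.continuous_deriv (by simp)
  -- support bound
  obtain ⟨R₀, hR₀⟩ := hsupp.isBounded.subset_closedBall 0
  set M : ℝ := max R₀ 0 with hMdef
  have hMnn : 0 ≤ M := le_max_right _ _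
  have hgz : ∀ s : ℝ, M < |s| → g s = 0 := by
    intro s hs
    by_contra hne
    have hmem : s • e₁ ∈ tsupport f := subset_tsupport f hne
    have h1 := hR₀ hmem
    rw [Metric.mem_closedBall, dist_zero_right, norm_smul, he₁, mul_one, Real.norm_eq_abs] at h1
    have h2 : R₀ ≤ M := le_max_left _ _
    linarith
  have hg'z : ∀ s : ℝ, M < |s| → deriv g s = 0 := by
    intro s hs
    have hev : g =ᶠ[nhds s] 0 := by
      have ho : IsOpen {t : ℝ | M < |t|} := isOpen_lt continuous_const continuous_abs
      filter_upwards [ho.mem_nhds hs] with t ht using hgz t ht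
    rw [hev.deriv_eq]; exact deriv_const s 0
  -- key radial derivative bound
  have hkey : ∀ y : E3, y ≠ 0 → ‖deriv g ‖y‖‖ ^ 2 ≤ gradSq f y := by
    intro y hy
    set u : E3 := ‖y‖⁻¹ • y with hu_def
    have hyn : (0:ℝ) < ‖y‖ := norm_pos_iff.mpr hy
    have hu : ‖u‖ = 1 := by
      rw [hu_def, norm_smul, Real.norm_eq_abs, abs_inv, abs_of_nonneg (norm_nonneg y),
        inv_mul_cancel₀ hyn.ne']
    have hyu : ‖y‖ • u = y := by rw [hu_def, smul_smul, mul_inv_cancel₀ hyn.ne', one_smul]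
    have hφ : HasDerivAt (fun t : ℝ => f (t • u)) (fderiv ℝ f y u) ‖y‖ := by
      have h1 : HasDerivAt (fun t : ℝ => t • u) u ‖y‖ := by
        simpa using (hasDerivAt_id (‖y‖)).smul_const u
      have h2 : HasFDerivAt f (fderiv ℝ f y) (‖y‖ • u) := by
        rw [hyu]; exact (hf.differentiable (by simp) y).hasFDerivAt
      exact h2.comp_hasDerivAt ‖y‖ h1
    have hgu : HasDerivAt g (fderiv ℝ f y u) ‖y‖ := by
      apply hφ.congr_of_eventuallyEq
      filter_upwards [isOpen_Ioi.mem_nhds hyn] with t ht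
      exact hrad (t • e₁) (t • u)
        (by rw [hnorm_smul_e t (le_of_lt ht), norm_smul, hu, mul_one, Real.norm_eq_abs,
              abs_of_pos ht])
    rw [hgu.deriv]
    exact dir_deriv_sq_le f y u hu
  -- the integrand on the half-line
  set Φ₁ : ℝ → ℝ := fun s => s^2 * ‖g s‖^2 with hΦ₁def
  set Φ₂ : ℝ → ℝ := fun s => s^2 * ‖deriv g s‖^2 with hΦ₂def
  set Φ : ℝ → ℝ := fun s => s^2 * (‖g s‖^2 + ‖deriv g s‖^2) with hΦdef
  have hΦsplit : ∀ s, Φ s = Φ₁ s + Φ₂ s := fun s => by simp [hΦdef, hΦ₁def, hΦ₂def]; ring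
  have hΦ₁cont : Continuous Φ₁ := (continuous_pow 2).mul (hgcont.norm.pow 2)
  have hΦ₂cont : Continuous Φ₂ := (continuous_pow 2).mul (hg'cont.norm.pow 2)
  have hΦcont : Continuous Φ := (continuous_pow 2).mul ((hgcont.norm.pow 2).add (hg'cont.norm.pow 2))
  have habs : ∀ s : ℝ, s ∉ Set.Icc (-M) M → M < |s| := by
    intro s hs
    rw [Set.mem_Icc, not_and_or] at hs
    rcases hs with h | h <;> push_neg at h
    · calc M < -s := by linarith
        _ ≤ |s| := neg_le_abs s
    · exact lt_of_lt_of_le h (le_abs_self s)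
  have hΦ₁supp : HasCompactSupport Φ₁ := by
    apply HasCompactSupport.intro (isCompact_Icc (a := -M) (b := M))
    intro s hs; simp [hΦ₁def, hgz s (habs s hs)]
  have hΦ₂supp : HasCompactSupport Φ₂ := by
    apply HasCompactSupport.intro (isCompact_Icc (a := -M) (b := M))
    intro s hs; simp [hΦ₂def, hg'z s (habs s hs)]
  have hΦ₁int : IntegrableOn Φ₁ (Set.Ioi (0:ℝ)) :=
    (hΦ₁cont.integrable_of_hasCompactSupport hΦ₁supp).integrableOn
  have hΦ₂int : IntegrableOn Φ₂ (Set.Ioi (0:ℝ)) :=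
    (hΦ₂cont.integrable_of_hasCompactSupport hΦ₂supp).integrableOn
  have hΦint : IntegrableOn Φ (Set.Ioi (0:ℝ)) := by
    have : Φ = fun s => Φ₁ s + Φ₂ s := funext hΦsplit
    rw [this]; exact hΦ₁int.add hΦ₂int
  -- polar coordinates
  have hpolar : ∀ h : ℝ → ℝ, (∫ y : E3, h ‖y‖) = κ * ∫ s in Set.Ioi (0:ℝ), s^2 * h s := by
    intro h
    have H := MeasureTheory.integral_fun_norm_addHaar (volume : Measure E3) h
    have hdim : Module.finrank ℝ E3 = 3 := finrank_euclideanSpace_fin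
    rw [hdim] at H
    simpa [hκdef, nsmul_eq_mul, smul_eq_mul, mul_assoc, Measure.real] using H
  have hint1 : ∫ y : E3, ‖f y‖^2 = κ * ∫ s in Set.Ioi (0:ℝ), Φ₁ s := by
    have h1 : ∫ y : E3, ‖f y‖^2 = ∫ y : E3, ‖g ‖y‖‖^2 := by
      congr 1; funext y; rw [hfg y]
    rw [h1, hpolar (fun s => ‖g s‖^2)]
  have hint2 : ∫ y : E3, ‖deriv g ‖y‖‖^2 = κ * ∫ s in Set.Ioi (0:ℝ), Φ₂ s :=
    hpolar (fun s => ‖deriv g s‖^2)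
  -- gradient comparison
  have hD2int : Integrable (fun y : E3 => ‖deriv g ‖y‖‖^2) := by
    apply Continuous.integrable_of_hasCompactSupport ((hg'cont.comp continuous_norm).norm.pow 2)
    apply HasCompactSupport.intro (isCompact_closedBall (0:E3) M)
    intro y hy
    have : M < ‖y‖ := by simpa [dist_zero_right] using hy
    simp [hg'z ‖y‖ (by rwa [abs_of_nonneg (norm_nonneg y)])]
  have hgradcont : Continuous (gradSq f) := by
    apply continuous_finset_sum
    intro i _
    exact ((hf.continuous_fderiv (by simp)).clm_apply continuous_const).norm.pow 2
  have hgradsupp : HasCompactSupport (gradSq f) := by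
    apply HasCompactSupport.intro hsupp
    intro y hy
    have hfd : fderiv ℝ f y = 0 := by
      have hev : f =ᶠ[nhds y] 0 := by
        filter_upwards [(isOpen_compl_iff.2 (isClosed_tsupport f)).mem_nhds hy] with z hz
        exact image_eq_zero_of_notMem_tsupport hz
      rw [hev.fderiv_eq]; exact fderiv_const_apply 0
    simp [gradSq, hfd]
  have hgradint : Integrable (gradSq f) :=
    hgradcont.integrable_of_hasCompactSupport hgradsupp
  have hae0 : ∀ᵐ (y : E3), y ≠ (0:E3) := by
    have h0 : volume ({(0:E3)} : Set E3) = 0 := measure_singleton _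
    filter_upwards [measure_eq_zero_iff_ae_notMem.mp h0] with a ha
    simpa using ha
  have hgradge : ∫ y : E3, ‖deriv g ‖y‖‖^2 ≤ ∫ y : E3, gradSq f y := by
    apply integral_mono_ae hD2int hgradint
    filter_upwards [hae0] with y hy using hkey y hy
  -- FTC on [r, R]
  set R : ℝ := max M r + 1 with hRdef
  have hrR : r ≤ R := by have := le_max_right M r; linarith
  have hMR : M < R := by have := le_max_left M r; linarith
  have hRpos : 0 < R := lt_of_lt_of_le hrpos hrR
  have hgR : g R = 0 := hgz R (by rwa [abs_of_pos hRpos])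
  set N : ℝ → ℝ := fun s => ‖g s‖^2 with hNdef
  have hNderiv : ∀ s, HasDerivAt N (2 * (inner ℝ (g s) (deriv g s) : ℝ)) s := by
    intro s
    have h := (hgdiff s).inner ℝ (hgdiff s)
    have heq : (fun t => (inner ℝ (g t) (g t) : ℝ)) = N := by
      funext t; rw [hNdef]; exact real_inner_self_eq_norm_sq (g t)
    rw [heq] at h
    refine h.congr_deriv ?_
    rw [real_inner_comm (deriv g s) (g s)]; ring
  set G : ℝ → ℝ := fun s => s^2 * N s with hGdef
  set DG : ℝ → ℝ := fun s => 2*s*N s + s^2*(2 * (inner ℝ (g s) (deriv g s) : ℝ)) with hDGdef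
  have hGderiv : ∀ s, HasDerivAt G (DG s) s := by
    intro s
    have h := (hasDerivAt_pow 2 s).mul (hNderiv s)
    refine h.congr_deriv ?_
    rw [hDGdef]; push_cast; ring
  have hDGcont : Continuous DG := by
    apply Continuous.add
    · exact (continuous_const.mul continuous_id).mul (hgcont.norm.pow 2)
    · exact (continuous_pow 2).mul (continuous_const.mul (hgcont.inner hg'cont))
  have hFTC : ∫ s in r..R, DG s = G R - G r :=
    intervalIntegral.integral_eq_sub_of_hasDerivAt (fun s _ => hGderiv s)
      (hDGcont.intervalIntegrable r R)
  have hGR : G R = 0 := by simp [hGdef, hNdef, hgR]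
  have hGr : G r = ∫ s in r..R, (-DG s) := by
    rw [intervalIntegral.integral_neg, hFTC, hGR]; ring
  have hptwise : ∀ s ∈ Set.Icc r R, -DG s ≤ Φ s := by
    intro s hs
    have h1 : |(inner ℝ (g s) (deriv g s) : ℝ)| ≤ ‖g s‖ * ‖deriv g s‖ := abs_real_inner_le_norm _ _
    have hs0 : 0 ≤ s := le_trans hrpos.le hs.1
    have h2 := abs_le.mp h1
    simp only [hDGdef, hΦdef, hNdef]
    have hNnn : (0:ℝ) ≤ ‖g s‖^2 := by positivity
    nlinarith [mul_nonneg (sq_nonneg s) (sq_nonneg (‖g s‖ - ‖deriv g s‖)),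
      mul_nonneg hs0 hNnn, mul_le_mul_of_nonneg_left h2.1 (sq_nonneg s)]
  have hGr_le : G r ≤ ∫ s in r..R, Φ s := by
    rw [hGr]
    exact intervalIntegral.integral_mono_on hrR (hDGcont.neg.intervalIntegrable r R)
      (hΦcont.intervalIntegrable r R) hptwise
  have hIoi : ∫ s in r..R, Φ s ≤ ∫ s in Set.Ioi (0:ℝ), Φ s := by
    rw [intervalIntegral.integral_of_le hrR]
    apply setIntegral_mono_set hΦint
    · exact Filter.Eventually.of_forall fun s => by positivity
    · exact Filter.Eventually.of_forall fun s hs => lt_trans hrpos hs.1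
  have hsplit : ∫ s in Set.Ioi (0:ℝ), Φ s
      = (∫ s in Set.Ioi (0:ℝ), Φ₁ s) + ∫ s in Set.Ioi (0:ℝ), Φ₂ s := by
    have : Φ = fun s => Φ₁ s + Φ₂ s := funext hΦsplit
    rw [this]; exact integral_add hΦ₁int hΦ₂int
  -- assembling
  have hA2 : A^2 = ∫ y : E3, ‖f y‖^2 := Real.sq_sqrt (integral_nonneg fun y => by positivity)
  have hB2 : B^2 = ∫ y : E3, gradSq f y :=
    Real.sq_sqrt (integral_nonneg fun y => gradSq_nonneg f y)
  have hI1 : ∫ s in Set.Ioi (0:ℝ), Φ₁ s = κ⁻¹ * A^2 := by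
    rw [hA2, hint1]; field_simp; rfl
  have hI2 : ∫ s in Set.Ioi (0:ℝ), Φ₂ s ≤ κ⁻¹ * B^2 := by
    rw [hB2]
    have h := hgradge
    rw [hint2] at h
    calc ∫ s in Set.Ioi (0:ℝ), Φ₂ s = κ⁻¹ * (κ * ∫ s in Set.Ioi (0:ℝ), Φ₂ s) := by
          field_simp
      _ ≤ κ⁻¹ * ∫ y : E3, gradSq f y := by
          apply mul_le_mul_of_nonneg_left h (by positivity)
  have hGrval : G r = r^2 * ‖f x‖^2 := by
    rw [hGdef, hNdef]
    have : f x = g r := hfg x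
    rw [this]
  have hmain : r^2 * ‖f x‖^2 ≤ κ⁻¹ * (A+B)^2 := by
    have h1 : r^2 * ‖f x‖^2 ≤ κ⁻¹ * A^2 + κ⁻¹ * B^2 := by
      rw [← hGrval, ← hI1]
      calc G r ≤ ∫ s in r..R, Φ s := hGr_le
        _ ≤ ∫ s in Set.Ioi (0:ℝ), Φ s := hIoi
        _ = (∫ s in Set.Ioi (0:ℝ), Φ₁ s) + ∫ s in Set.Ioi (0:ℝ), Φ₂ s := hsplit
        _ ≤ (∫ s in Set.Ioi (0:ℝ), Φ₁ s) + κ⁻¹ * B^2 := by linarith [hI2]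
    have h2 : κ⁻¹ * A^2 + κ⁻¹ * B^2 ≤ κ⁻¹ * (A+B)^2 := by
      have : A^2 + B^2 ≤ (A+B)^2 := by nlinarith
      have hκinv : (0:ℝ) ≤ κ⁻¹ := by positivity
      nlinarith
    linarith
  have hfinal : r * ‖f x‖ ≤ Real.sqrt κ⁻¹ * (A+B) := by
    have h1 : (r * ‖f x‖)^2 ≤ κ⁻¹ * (A+B)^2 := by rw [mul_pow]; exact hmain
    have h2 : r * ‖f x‖ = Real.sqrt ((r * ‖f x‖)^2) :=
      (Real.sqrt_sq (by positivity)).symm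
    rw [h2]
    calc Real.sqrt ((r * ‖f x‖)^2) ≤ Real.sqrt (κ⁻¹ * (A+B)^2) := Real.sqrt_le_sqrt h1
      _ = Real.sqrt κ⁻¹ * (A+B) := by
          rw [Real.sqrt_mul (by positivity), Real.sqrt_sq hABnn]
  calc ‖x‖ * ‖f x‖ = r * ‖f x‖ := rfl
    _ ≤ Real.sqrt κ⁻¹ * (A+B) := hfinal
    _ ≤ (Real.sqrt κ⁻¹ + 1) * (A+B) := by nlinarith [Real.sqrt_nonneg κ⁻¹]


end
end

section
/- Continuity (barrier) argument underlying kinetic-energy trapping: let 0 < δ₀ < 1. Then there exists δ₁ ∈ (0,1), depending only on δ₀, such that for every interval I ⊆ ℝ containing 0 and every continuous function y : I → ℝ with y(t) ≥ 0 for all t ∈ I, y(0) < 1, and (3/2) y(t) − (1/2) y(t)³ ≤ 1 − δ₀ for all t ∈ I, one has y(t) ≤ 1 − δ₁ for all t ∈ I. -/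
/-- Continuity (barrier) argument underlying kinetic-energy trapping. -/
theorem stmt6 (δ₀ : ℝ) (hδ₀ : 0 < δ₀) (hδ₀' : δ₀ < 1) :
    ∃ δ₁ : ℝ, 0 < δ₁ ∧ δ₁ < 1 ∧
      ∀ I : Set ℝ, I.OrdConnected → (0 : ℝ) ∈ I →
        ∀ y : ℝ → ℝ, ContinuousOn y I → (∀ t ∈ I, 0 ≤ y t) → y 0 < 1 →
          (∀ t ∈ I, (3 / 2) * y t - (1 / 2) * (y t) ^ 3 ≤ 1 - δ₀) →
          ∀ t ∈ I, y t ≤ 1 - δ₁ := by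
  set η := Real.sqrt (δ₀ / 2) with hη
  have hη0 : 0 < η := Real.sqrt_pos.mpr (by linarith)
  have hη2 : η ^ 2 = δ₀ / 2 := Real.sq_sqrt (by linarith)
  have hη1 : η < 1 := by
    nlinarith [hη2, hη0]
  refine ⟨η, hη0, hη1, ?_⟩
  intro I hI h0 y hy hpos hy0 hc
  -- dichotomy
  have dich : ∀ t ∈ I, y t ≤ 1 - η ∨ 1 + η ≤ y t := by
    intro t ht
    by_contra h
    push_neg at h
    obtain ⟨h1, h2⟩ := h
    have hp := hpos t ht
    have hcc := hc t ht
    nlinarith [sq_nonneg (y t - 1), sq_nonneg (y t + 1)]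
  have hy0' : y 0 ≤ 1 - η := by
    rcases dich 0 h0 with h | h
    · exact h
    · linarith
  intro t ht
  rcases dich t ht with h | h
  · exact h
  · exfalso
    have hsub : Set.uIcc 0 t ⊆ I := hI.uIcc_subset h0 ht
    have hIVT : Set.uIcc (y 0) (y t) ⊆ y '' Set.uIcc 0 t :=
      intermediate_value_uIcc (hy.mono hsub)
    have h1mem : (1 : ℝ) ∈ Set.uIcc (y 0) (y t) := by
      rw [Set.mem_uIcc]
      left
      constructor <;> linarith
    obtain ⟨c, hc1, hc2⟩ := hIVT h1mem
    have := hc c (hsub hc1)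
    rw [hc2] at this
    norm_num at this
    linarith
end

section
/- Coercivity II: let W(x) = (1 + |x|²/3)^(−1/2) and let 0 < δ₁ < 1. Suppose f : ℝ³ → ℂ has ∇f ∈ L²(ℝ³) and f ∈ L⁶(ℝ³), and satisfies the Sobolev bound ∫_{ℝ³}|f|⁶ dx ≤ (∫_{ℝ³}|∇W|² dx)^(−2) (∫_{ℝ³}|∇f|² dx)³ together with ∫_{ℝ³}|∇f|² dx ≤ (1 − δ₁) ∫_{ℝ³}|∇W|² dx. Then ∫_{ℝ³}|∇f|² dx − ∫_{ℝ³}|f|⁶ dx ≥ δ₁ ∫_{ℝ³}|∇f|² dx, and moreover there exists δ₂ > 0 depending only on δ₁ (for instance δ₂ = δ₁/(1−δ₁)²) such that ∫_{ℝ³}|∇f|² dx − ∫_{ℝ³}|f|⁶ dx ≥ δ₂ ∫_{ℝ³}|f|⁶ dx. -/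
open MeasureTheory

noncomputable section

/-- The ground state `W(x) = (1 + |x|²/3)^(-1/2)`. -/
def W (x : E3) : ℝ := (1 + ‖x‖ ^ 2 / 3) ^ (-(1 : ℝ) / 2)

/-- `|∇W(x)|²`. -/
def gradWSq (x : E3) : ℝ :=
  ∑ i : Fin 3, (fderiv ℝ W x (EuclideanSpace.single i (1 : ℝ))) ^ 2

lemma arith (δ₁ A B K : ℝ) (hδ₁ : 0 < δ₁) (hδ₁' : δ₁ < 1)
    (hA : 0 ≤ A) (hB : 0 ≤ B) (hK : 0 ≤ K)
    (hS : B ≤ (K ^ 2)⁻¹ * A ^ 3) (hAK : A ≤ (1 - δ₁) * K) :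
    A - B ≥ δ₁ * A ∧ A - B ≥ δ₁ * B := by
  rcases eq_or_lt_of_le hK with h0 | h0
  · have hK0 : K = 0 := h0.symm
    have hA0 : A = 0 := le_antisymm (by nlinarith) hA
    have hB0 : B = 0 := le_antisymm (by simp [hK0, hA0] at hS; linarith) hB
    constructor <;> simp [hA0, hB0]
  · have hK2 : (0:ℝ) < K ^ 2 := by positivity
    have hS' : B * K ^ 2 ≤ A ^ 3 := by
      calc B * K ^ 2 ≤ ((K ^ 2)⁻¹ * A ^ 3) * K ^ 2 := by nlinarith
        _ = A ^ 3 := by field_simp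
    have hA2 : A ^ 2 ≤ (1 - δ₁) ^ 2 * K ^ 2 := by nlinarith
    have hBA : B ≤ (1 - δ₁) ^ 2 * A := by nlinarith
    have hBA' : B ≤ A := by nlinarith [mul_nonneg (mul_nonneg hδ₁.le hA) (by linarith : (0:ℝ) ≤ 2 - δ₁)]
    refine ⟨by nlinarith, ?_⟩
    nlinarith [mul_le_mul_of_nonneg_left hBA' hδ₁.le]

/-- Coercivity II. -/
theorem stmt8 (δ₁ : ℝ) (hδ₁ : 0 < δ₁) (hδ₁' : δ₁ < 1) :
    ∃ δ₂ > (0 : ℝ), ∀ f : E3 → ℂ,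
      Integrable (fun x => gradSq f x) volume →
      Integrable (fun x : E3 => ‖f x‖ ^ 6) volume →
      (∫ x : E3, ‖f x‖ ^ 6 ≤
        ((∫ x : E3, gradWSq x) ^ 2)⁻¹ * (∫ x : E3, gradSq f x) ^ 3) →
      (∫ x : E3, gradSq f x ≤ (1 - δ₁) * ∫ x : E3, gradWSq x) →
      ((∫ x : E3, gradSq f x) - (∫ x : E3, ‖f x‖ ^ 6) ≥ δ₁ * ∫ x : E3, gradSq f x) ∧
      ((∫ x : E3, gradSq f x) - (∫ x : E3, ‖f x‖ ^ 6) ≥ δ₂ * ∫ x : E3, ‖f x‖ ^ 6) := by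
  refine ⟨δ₁, hδ₁, fun f _ _ hS hAK => ?_⟩
  have hA : 0 ≤ ∫ x : E3, gradSq f x :=
    integral_nonneg fun x => Finset.sum_nonneg fun i _ => sq_nonneg _
  have hB : 0 ≤ ∫ x : E3, ‖f x‖ ^ 6 :=
    integral_nonneg fun x => by positivity
  have hK : 0 ≤ ∫ x : E3, gradWSq x :=
    integral_nonneg fun x => Finset.sum_nonneg fun i _ => sq_nonneg _
  exact arith δ₁ _ _ _ hδ₁ hδ₁' hA hB hK hS hAK

end
end

section
/- Modified-energy lower bound: let W(x) = (1 + |x|²/3)^(−1/2) and let 0 < δ₁ < 1. Suppose f : ℝ³ → ℂ has ∇f ∈ L²(ℝ³) and f ∈ L⁶(ℝ³), and satisfies ∫_{ℝ³}|f|⁶ dx ≤ (∫_{ℝ³}|∇W|² dx)^(−2) (∫_{ℝ³}|∇f|² dx)³ and ∫_{ℝ³}|∇f|² dx ≤ (1 − δ₁) ∫_{ℝ³}|∇W|² dx. Then E^c(f) ≥ ((2 + δ₁)/6) ∫_{ℝ³}|∇f|² dx. -/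
open MeasureTheory

noncomputable section

/-- The modified (energy-critical) energy `E^c(f) = (1/2)∫|∇f|² − (1/6)∫|f|⁶`. -/
def Ec (f : E3 → ℂ) : ℝ :=
  (1 / 2) * (∫ x : E3, gradSq f x) - (1 / 6) * ∫ x : E3, ‖f x‖ ^ 6

/-- Modified-energy lower bound. -/
theorem stmt9 (δ₁ : ℝ) (hδ₁ : 0 < δ₁) (hδ₁' : δ₁ < 1) (f : E3 → ℂ)
    (hgrad : Integrable (fun x => gradSq f x) volume)
    (hf6 : Integrable (fun x : E3 => ‖f x‖ ^ 6) volume)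
    (hSob : ∫ x : E3, ‖f x‖ ^ 6 ≤
      ((∫ x : E3, gradWSq x) ^ 2)⁻¹ * (∫ x : E3, gradSq f x) ^ 3)
    (hsmall : ∫ x : E3, gradSq f x ≤ (1 - δ₁) * ∫ x : E3, gradWSq x) :
    Ec f ≥ ((2 + δ₁) / 6) * ∫ x : E3, gradSq f x := by
  set A := ∫ x : E3, gradSq f x with hA
  set B := ∫ x : E3, ‖f x‖ ^ 6 with hB
  set K := ∫ x : E3, gradWSq x with hK
  have hA0 : 0 ≤ A := integral_nonneg fun x =>
    Finset.sum_nonneg fun i _ => sq_nonneg _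
  have hB0 : 0 ≤ B := integral_nonneg fun x => by positivity
  have hK0 : 0 ≤ K := integral_nonneg fun x =>
    Finset.sum_nonneg fun i _ => sq_nonneg _
  have key : B ≤ (1 - δ₁) ^ 2 * A := by
    rcases eq_or_lt_of_le hK0 with h | h
    · have hA' : A = 0 := le_antisymm (by nlinarith) hA0
      have : B ≤ 0 := by rw [hA'] at hSob; simpa using hSob
      nlinarith
    · have h2 : A ^ 2 ≤ ((1 - δ₁) * K) ^ 2 := pow_le_pow_left₀ hA0 hsmall 2
      have h1 : A ^ 3 ≤ (1 - δ₁) ^ 2 * K ^ 2 * A := by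
        nlinarith [mul_le_mul_of_nonneg_left h2 hA0]
      calc B ≤ (K ^ 2)⁻¹ * A ^ 3 := hSob
        _ ≤ (K ^ 2)⁻¹ * ((1 - δ₁) ^ 2 * K ^ 2 * A) := by
            apply mul_le_mul_of_nonneg_left h1 (by positivity)
        _ = (1 - δ₁) ^ 2 * A := by field_simp
  have : Ec f = (1 / 2) * A - (1 / 6) * B := rfl
  rw [this]
  nlinarith

end
end
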